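/- For all n ≥ 1, [.w_n l_{n+1}] = T^{2^n}([.w_{n+1} l_{n+1}]), and [.w_{n+1} l_n] = T^{2^{n+1}}([.w_{n+2} l_n]) ⊔ T^{3·2^n}([.w_{n+2} l_n]) (disjoint union). -/

import Mathlib

inductive A : Type
  | a | b | c | d
deriving DecidableEq

def subst : A → List A
  | A.a => [A.a, A.c, A.a]
  | A.b => [A.d]
  | A.c => [A.b]
  | A.d => [A.c]

def substW (u : List A) : List A := u.flatMap subst

def wrd (n : ℕ) : List A := substW^[n - 1] [A.a]

def ltr (n : ℕ) : List A := substW^[n - 1] [A.c]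

def seg (ξ : ℕ → A) (s m : ℕ) : List A := (List.range m).map fun i => ξ (s + 1 + i)

def IsFixed (ξ : ℕ → A) : Prop :=
  ∀ N : ℕ, seg ξ 0 ((substW (seg ξ 0 N)).length) = substW (seg ξ 0 N)

/-- The phase space of the subshift: bi-infinite sequences all of whose finite
factors occur in the fixed point `ξ`. -/
def Omega (ξ : ℕ → A) : Set (ℤ → A) :=
  {ω | ∀ (s : ℤ) (m : ℕ), ∃ t : ℕ,
    seg ξ t m = (List.range m).map fun i => ω (s + 1 + (i : ℤ))}

/-- The `N`-th power of the shift map `T`. -/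
def shiftN (N : ℤ) (ω : ℤ → A) : ℤ → A := fun i => ω (i + N)

/-- The cylinder `[u.v]` inside `Omega ξ`. -/
def cyl (ξ : ℕ → A) (u v : List A) : Set (ℤ → A) :=
  {ω | ω ∈ Omega ξ ∧
    (List.range u.length).map (fun i => ω (1 + (i : ℤ) - u.length)) = u ∧
    (List.range v.length).map (fun i => ω (1 + (i : ℤ))) = v}

/-- The cylinder `[.v]` with empty past word. -/
def cylF (ξ : ℕ → A) (v : List A) : Set (ℤ → A) := cyl ξ [] v

/-!
The fixed point is the Toeplitz sequence `ξ m = τ^(v₂ m) a`, where `τ` (`a ↦ c ↦ b ↦ d ↦ c`) is the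
action of `σ` on the letters other than `a`. Hence `ξ (m + P) = ξ m` whenever `v₂ m < v₂ P`, and,
since `τ` has no fixed point, `w_{n+1}` can only be read at offsets `P` with `2 ^ n ∣ P`. Every point
of `Ω` agrees on each finite window with a translate of `ξ` (extended to `ℤ` through `v₂`), and the
letter that follows `w_n` or `w_{n+1}` fixes the next binary digits of the offset, because neither
`τ` nor `τ²` has a fixed point: the offset is `2 ^ n mod 2 ^ (n + 1)` in the first identity and
`2 ^ (n + 1)` or `3 · 2 ^ n mod 2 ^ (n + 2)` in the second. The two pieces of the union read
`τ^(n+1) a` and `τ^n a` at the origin.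
-/

def tau : A → A
  | A.a => A.c
  | A.b => A.d
  | A.c => A.b
  | A.d => A.c

lemma tau_ne_self (x : A) : tau x ≠ x := by cases x <;> decide

lemma tau_tau_ne_self (x : A) : tau (tau x) ≠ x := by cases x <;> decide

lemma tau_ne_a (x : A) : tau x ≠ A.a := by cases x <;> decide

lemma subst_of_ne_a {x : A} (hx : x ≠ A.a) : subst x = [tau x] := by
  cases x <;> first | exact absurd rfl hx | rfl

def levelLetter (k : ℕ) : A := tau^[k] A.a

lemma levelLetter_succ (k : ℕ) : levelLetter (k + 1) = tau (levelLetter k) :=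
  Function.iterate_succ_apply' tau k A.a

lemma levelLetter_succ_ne (k : ℕ) : levelLetter (k + 1) ≠ levelLetter k := by
  rw [levelLetter_succ]; exact tau_ne_self _

lemma levelLetter_add_two_ne (k : ℕ) : levelLetter (k + 2) ≠ levelLetter k := by
  rw [levelLetter_succ, levelLetter_succ]; exact tau_tau_ne_self _

def toeplitz (m : ℤ) : A := levelLetter (padicValInt 2 m)

lemma toeplitz_eq_of_dvd_of_not_dvd {k : ℕ} {m : ℤ} (h : 2 ^ k ∣ m) (h' : ¬ 2 ^ (k + 1) ∣ m) :
    toeplitz m = levelLetter k := by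
  have hm : m ≠ 0 := by rintro rfl; exact h' (dvd_zero _)
  have := Fact.mk Nat.prime_two
  have hle := (padicValInt_dvd_iff (p := 2) k m).1 (mod_cast h)
  have hlt : ¬ k + 1 ≤ padicValInt 2 m := fun hle' =>
    h' (mod_cast (padicValInt_dvd_iff (p := 2) (k + 1) m).2 (Or.inr hle'))
  rw [toeplitz, show padicValInt 2 m = k by omega]

lemma toeplitz_two_pow_mul_of_odd (k : ℕ) {u : ℤ} (hu : Odd u) :
    toeplitz (2 ^ k * u) = levelLetter k := by
  refine toeplitz_eq_of_dvd_of_not_dvd (dvd_mul_right _ _) ?_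
  rw [pow_succ, mul_dvd_mul_iff_left (by positivity)]
  rcases hu with ⟨r, rfl⟩; omega

lemma toeplitz_two_pow_mul_of_emod_four {q : ℤ} (k : ℕ) (hq : q % 4 = 2) :
    toeplitz (2 ^ k * q) = levelLetter (k + 1) := by
  obtain ⟨u, rfl⟩ : ∃ u, q = 2 * u := ⟨q / 2, by omega⟩
  rw [← mul_assoc, ← pow_succ]
  exact toeplitz_two_pow_mul_of_odd _ (Int.odd_iff.2 (by omega))

lemma toeplitz_two_pow (k : ℕ) : toeplitz (2 ^ k) = levelLetter k := by
  simpa using toeplitz_two_pow_mul_of_odd k odd_one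

lemma toeplitz_of_odd {m : ℤ} (hm : Odd m) : toeplitz m = A.a := by
  simpa [levelLetter] using toeplitz_two_pow_mul_of_odd 0 hm

lemma toeplitz_two_mul {m : ℤ} (hm : m ≠ 0) : toeplitz (2 * m) = tau (toeplitz m) := by
  have := Fact.mk Nat.prime_two
  have h := padicValInt_mul_eq_succ (p := 2) m hm
  push_cast at h
  rw [toeplitz, toeplitz, mul_comm, h, levelLetter_succ]

lemma toeplitz_add_of_dvd {K : ℕ} {P m : ℤ} (hP : 2 ^ K ∣ P) (hm : ¬ 2 ^ K ∣ m) :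
    toeplitz (m + P) = toeplitz m := by
  have := Fact.mk Nat.prime_two
  set k := padicValInt 2 m
  have hm0 : m ≠ 0 := by rintro rfl; exact hm (dvd_zero _)
  have hk : (2 : ℤ) ^ k ∣ m := mod_cast padicValInt_dvd (p := 2) m
  have hk' : ¬ (2 : ℤ) ^ (k + 1) ∣ m := fun h => by
    have := (padicValInt_dvd_iff (p := 2) (k + 1) m).1 (mod_cast h); omega
  have hkK : k + 1 ≤ K := by
    by_contra! h
    exact hm ((pow_dvd_pow 2 (by omega)).trans hk)
  have hP' : (2 : ℤ) ^ (k + 1) ∣ P := (pow_dvd_pow 2 hkK).trans hP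
  rw [toeplitz_eq_of_dvd_of_not_dvd (k := k) (dvd_add hk ((pow_dvd_pow 2 k.le_succ).trans hP'))
    (fun h => hk' ((dvd_add_left hP').1 h))]
  rfl

lemma two_pow_dvd_of_toeplitz_add_eq {P : ℤ} (K : ℕ)
    (h : ∀ j : ℤ, 0 < j → j < 2 ^ (K + 1) → toeplitz (j + P) = toeplitz j) : 2 ^ K ∣ P := by
  induction K with
  | zero => simp
  | succ K ih =>
    have hK : (0 : ℤ) < 2 ^ K := by positivity
    have h4 : (2 : ℤ) ^ (K + 1 + 1) = 4 * 2 ^ K := by ring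
    obtain ⟨q, rfl⟩ := ih fun j hj hj' => h j hj (by rw [h4]; rw [pow_succ] at hj'; omega)
    rw [pow_succ, mul_dvd_mul_iff_left hK.ne']
    by_contra hq
    -- one of `q + 1`, `q + 3` is `2 mod 4`, so the level just above `K` shows up in the window
    have h1 := h (2 ^ K) hK (by omega)
    have h3 := h (3 * 2 ^ K) (by omega) (by omega)
    rw [show 2 ^ K + 2 ^ K * q = 2 ^ K * (q + 1) by ring] at h1
    rw [show 3 * 2 ^ K + 2 ^ K * q = 2 ^ K * (q + 3) by ring, show (3 : ℤ) * 2 ^ K = 2 ^ K * 3 by ring,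
      toeplitz_two_pow_mul_of_odd K (u := 3) ⟨1, by norm_num⟩] at h3
    rw [toeplitz_two_pow] at h1
    rcases (by omega : (q + 1) % 4 = 2 ∨ (q + 3) % 4 = 2) with hq' | hq'
    · exact levelLetter_succ_ne K (toeplitz_two_pow_mul_of_emod_four K hq' ▸ h1)
    · exact levelLetter_succ_ne K (toeplitz_two_pow_mul_of_emod_four K hq' ▸ h3)

lemma dvd_sub_of_toeplitz_two_pow_succ_add {k : ℕ} {P : ℤ} (hP : 2 ^ k ∣ P)
    (h : toeplitz (2 ^ (k + 1) + P) = levelLetter (k + 2)) : 2 ^ (k + 2) ∣ P - 2 ^ (k + 1) := by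
  obtain ⟨q, rfl⟩ := hP
  rw [show 2 ^ (k + 1) + 2 ^ k * q = 2 ^ k * (q + 2) by ring] at h
  obtain hq | hq | hq : q % 4 = 2 ∨ q % 4 = 0 ∨ q % 2 = 1 := by omega
  · rw [show 2 ^ k * q - 2 ^ (k + 1) = 2 ^ k * (q - 2) by ring, pow_add]
    exact mul_dvd_mul_left _ (by norm_num; omega)
  · rw [toeplitz_two_pow_mul_of_emod_four k (by omega)] at h
    exact absurd h.symm (levelLetter_succ_ne (k + 1))
  · rw [toeplitz_two_pow_mul_of_odd k (Int.odd_iff.2 (by omega))] at h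
    exact absurd h.symm (levelLetter_add_two_ne k)

lemma dvd_sub_or_dvd_sub_of_toeplitz_two_pow_add {n : ℕ} {P : ℤ} (hP : 2 ^ n ∣ P)
    (h₁ : toeplitz (2 ^ n + P) = levelLetter n) (h₂ : toeplitz (2 ^ (n + 1) + P) = levelLetter n) :
    2 ^ (n + 2) ∣ P - 2 ^ (n + 1) ∨ 2 ^ (n + 2) ∣ P - 3 * 2 ^ n := by
  obtain ⟨q, rfl⟩ := hP
  rw [show 2 ^ n + 2 ^ n * q = 2 ^ n * (q + 1) by ring] at h₁
  rw [show 2 ^ (n + 1) + 2 ^ n * q = 2 ^ n * (q + 2) by ring] at h₂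
  obtain hq | hq | hq | hq : q % 4 = 0 ∨ q % 4 = 1 ∨ q % 4 = 2 ∨ q % 4 = 3 := by omega
  · rw [toeplitz_two_pow_mul_of_emod_four n (by omega)] at h₂
    exact absurd h₂ (levelLetter_succ_ne n)
  · rw [toeplitz_two_pow_mul_of_emod_four n (by omega)] at h₁
    exact absurd h₁ (levelLetter_succ_ne n)
  · left
    rw [show 2 ^ n * q - 2 ^ (n + 1) = 2 ^ n * (q - 2) by ring, pow_add]
    exact mul_dvd_mul_left _ (by norm_num; omega)
  · right
    rw [show 2 ^ n * q - 3 * 2 ^ n = 2 ^ n * (q - 3) by ring, pow_add]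
    exact mul_dvd_mul_left _ (by norm_num; omega)

lemma dvd_of_toeplitz_two_pow_add_two_add {n : ℕ} {P : ℤ} (hP : 2 ^ (n + 1) ∣ P)
    (h : toeplitz (2 ^ (n + 2) + P) = levelLetter n) : 2 ^ (n + 2) ∣ P := by
  obtain ⟨q, rfl⟩ := hP
  rw [show 2 ^ (n + 2) + 2 ^ (n + 1) * q = 2 ^ (n + 1) * (q + 2) by ring] at h
  rw [pow_succ _ (n + 1), mul_dvd_mul_iff_left (by positivity)]
  by_contra hq
  rw [toeplitz_two_pow_mul_of_odd (n + 1) (Int.odd_iff.2 (by omega))] at h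
  exact levelLetter_succ_ne n h

lemma not_dvd_of_lt_of_lt {d j m : ℤ} (h₁ : m * d < j) (h₂ : j < (m + 1) * d) : ¬ d ∣ j := by
  rintro ⟨c, rfl⟩
  have hd : 0 < d := by nlinarith
  have h₁' : m < c := lt_of_mul_lt_mul_left (by linarith) hd.le
  have h₂' : c < m + 1 := lt_of_mul_lt_mul_left (by linarith) hd.le
  omega

lemma substW_append (u v : List A) : substW (u ++ v) = substW u ++ substW v :=
  List.flatMap_append

lemma substW_singleton_of_ne_a {x : A} (hx : x ≠ A.a) : substW [x] = [tau x] := by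
  rw [substW, List.flatMap_singleton, subst_of_ne_a hx]

def toeplitzWord (m : ℕ) : List A := (List.range m).map fun i : ℕ => toeplitz (i + 1)

@[simp]
lemma toeplitzWord_length (m : ℕ) : (toeplitzWord m).length = m := by simp [toeplitzWord]

lemma toeplitzWord_succ (m : ℕ) :
    toeplitzWord (m + 1) = toeplitzWord m ++ [toeplitz (m + 1)] := by
  simp [toeplitzWord, List.range_succ]

lemma substW_toeplitzWord (m : ℕ) : substW (toeplitzWord m) = toeplitzWord (2 * m + m % 2) := by
  induction m with
  | zero => rfl
  | succ m ih =>
    rw [toeplitzWord_succ, substW_append, ih]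
    obtain ⟨r, rfl | rfl⟩ := Nat.even_or_odd' m
    · -- the new letter sits at the odd position `2r + 1`, so it is `a ↦ aca`
      rw [show 2 * (2 * r) + 2 * r % 2 = 4 * r by omega,
        show 2 * (2 * r + 1) + (2 * r + 1) % 2 = 4 * r + 1 + 1 + 1 by omega,
        toeplitzWord_succ, toeplitzWord_succ, toeplitzWord_succ]
      have h₀ : toeplitz ((2 * r : ℕ) + 1) = A.a := toeplitz_of_odd ⟨r, by push_cast; ring⟩
      have h₁ : toeplitz ((4 * r : ℕ) + 1) = A.a := toeplitz_of_odd ⟨2 * r, by push_cast; ring⟩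
      have h₂ : toeplitz ((4 * r + 1 : ℕ) + 1) = A.c := by
        rw [show ((4 * r + 1 : ℕ) : ℤ) + 1 = 2 * ((2 * r : ℕ) + 1) by push_cast; ring,
          toeplitz_two_mul (by omega), h₀]
        rfl
      have h₃ : toeplitz ((4 * r + 1 + 1 : ℕ) + 1) = A.a :=
        toeplitz_of_odd ⟨2 * r + 1, by push_cast; ring⟩
      rw [h₀, h₁, h₂, h₃]
      simp only [substW, List.flatMap_singleton, subst, List.append_assoc]
      rfl
    · -- the new letter sits at the even position `2r + 2`, so it is `x ↦ τ x`
      rw [show 2 * (2 * r + 1 + 1) + (2 * r + 1 + 1) % 2 = 2 * (2 * r + 1) + (2 * r + 1) % 2 + 1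
        by omega, toeplitzWord_succ]
      have hpos : ((r : ℕ) + 1 : ℤ) ≠ 0 := by omega
      have hev : ((2 * r + 1 : ℕ) : ℤ) + 1 = 2 * ((r : ℕ) + 1) := by push_cast; ring
      have hne : toeplitz ((2 * r + 1 : ℕ) + 1) ≠ A.a := by
        rw [hev, toeplitz_two_mul hpos]
        exact tau_ne_a _
      rw [substW_singleton_of_ne_a hne, hev, ← toeplitz_two_mul (by omega)]
      congr 3
      push_cast
      omega

lemma substW_toeplitzWord_two_pow (K : ℕ) :
    substW (toeplitzWord (2 ^ (K + 1) - 1)) = toeplitzWord (2 ^ (K + 2) - 1) := by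
  rw [substW_toeplitzWord]
  congr 1
  have := Nat.one_le_two_pow (n := K)
  rw [pow_succ 2 (K + 1), pow_succ 2 K]
  omega

lemma wrd_succ (K : ℕ) : wrd (K + 1) = toeplitzWord (2 ^ (K + 1) - 1) := by
  induction K with
  | zero => simp [wrd, toeplitzWord, toeplitz_of_odd odd_one]
  | succ K ih =>
    rw [← substW_toeplitzWord_two_pow, ← ih]
    exact Function.iterate_succ_apply' substW K [A.a]

lemma ltr_succ (m : ℕ) : ltr (m + 1) = [levelLetter (m + 1)] := by
  induction m with
  | zero => rfl
  | succ m ih =>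
    have hne : levelLetter (m + 1) ≠ A.a := by rw [levelLetter_succ]; exact tau_ne_a _
    rw [show ltr (m + 2) = substW (ltr (m + 1)) from Function.iterate_succ_apply' substW m [A.c],
      ih, substW_singleton_of_ne_a hne, ← levelLetter_succ]

section

variable {ξ : ℕ → A}

lemma IsFixed.apply_one (hξ : IsFixed ξ) : ξ 1 = A.a := by
  have h := hξ 1
  simp only [seg, List.range_one, List.map_cons, List.map_nil] at h
  cases hx : ξ 1 <;> simp_all [substW, subst]

lemma IsFixed.seg_zero_eq_toeplitzWord (hξ : IsFixed ξ) (K : ℕ) :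
    seg ξ 0 (2 ^ (K + 1) - 1) = toeplitzWord (2 ^ (K + 1) - 1) := by
  induction K with
  | zero => simp [seg, toeplitzWord, hξ.apply_one, toeplitz_of_odd odd_one]
  | succ K ih =>
    have h := hξ (2 ^ (K + 1) - 1)
    rwa [ih, substW_toeplitzWord_two_pow, toeplitzWord_length] at h

lemma IsFixed.apply_eq_toeplitz (hξ : IsFixed ξ) {m : ℕ} (hm : 1 ≤ m) : ξ m = toeplitz m := by
  have hlt : m - 1 < 2 ^ (m + 1) - 1 := by have := Nat.lt_two_pow_self (n := m + 1); omega
  have h := congrArg (·[m - 1]?) (hξ.seg_zero_eq_toeplitzWord m)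
  simp only [seg, toeplitzWord, List.getElem?_map, List.getElem?_range hlt, Option.map_some,
    Option.some.injEq] at h
  rwa [show 0 + 1 + (m - 1) = m by omega, show ((m - 1 : ℕ) : ℤ) + 1 = m by omega] at h

-- `Omega` and `cyl` index by `List.range m` coerced to `List ℤ`, which elaborates through the list monad.
lemma map_range_bind_pure {β : Type*} (f : ℤ → β) (m : ℕ) :
    List.map f (do let i ← List.range m; pure (i : ℤ)) = (List.range m).map fun i : ℕ => f i := by
  simp only [List.pure_def, List.bind_eq_flatMap, ← List.map_eq_flatMap, List.map_map]
  rfl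

lemma IsFixed.exists_offset (hξ : IsFixed ξ) {ω : ℤ → A} (hω : ω ∈ Omega ξ) (R : ℤ) :
    ∃ P : ℤ, ∀ j : ℤ, -R ≤ j → j ≤ R → ω j = toeplitz (j + P) := by
  obtain ⟨t, ht⟩ := hω (-R - 1) (2 * R + 1).toNat
  refine ⟨t + R + 1, fun j hj hj' => ?_⟩
  have hlt : (j + R).toNat < (2 * R + 1).toNat := by omega
  have h := congrArg (·[(j + R).toNat]?) ht
  simp only [seg, map_range_bind_pure, List.getElem?_map, List.getElem?_range hlt, Option.map_some,
    Option.some.injEq] at h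
  rw [show -R - 1 + 1 + ((j + R).toNat : ℤ) = j by omega, hξ.apply_eq_toeplitz (by omega)] at h
  rw [← h]
  congr 1
  push_cast
  omega

lemma shiftN_mem_Omega {ω : ℤ → A} (hω : ω ∈ Omega ξ) (N : ℤ) : shiftN N ω ∈ Omega ξ := by
  intro s m
  obtain ⟨t, ht⟩ := hω (s + N) m
  refine ⟨t, ht.trans (List.map_congr_left fun i _ => ?_)⟩
  simp only [shiftN]
  congr 1
  ring

lemma mem_image_shiftN_iff {S : Set (ℤ → A)} {N : ℤ} {ω : ℤ → A} :
    ω ∈ shiftN N '' S ↔ shiftN (-N) ω ∈ S := by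
  constructor
  · rintro ⟨ω', hω', rfl⟩
    convert hω'
    funext j
    simp [shiftN]
  · intro h
    exact ⟨_, h, funext fun j => by simp [shiftN]⟩

lemma mem_cylF_iff {v : List A} {ω : ℤ → A} :
    ω ∈ cylF ξ v ↔ ω ∈ Omega ξ ∧ ∀ (i : ℕ) (hi : i < v.length), ω (i + 1) = v[i] := by
  simp only [cylF, cyl, map_range_bind_pure]
  simp [List.ext_getElem_iff, add_comm]

lemma mem_cylF_toeplitzWord_append_iff {M : ℕ} {x : A} {ω : ℤ → A} :
    ω ∈ cylF ξ (toeplitzWord M ++ [x]) ↔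
      ω ∈ Omega ξ ∧ (∀ j : ℤ, 0 < j → j ≤ M → ω j = toeplitz j) ∧ ω (M + 1) = x := by
  rw [mem_cylF_iff]
  refine and_congr_right fun _ => ⟨fun h => ⟨fun j hj hj' => ?_, ?_⟩, fun ⟨h, hx⟩ i hi => ?_⟩
  · obtain ⟨i, rfl⟩ : ∃ i : ℕ, j = i + 1 := ⟨(j - 1).toNat, by omega⟩
    rw [h i (by simp; omega), List.getElem_append_left (by simp; omega)]
    simp [toeplitzWord]
  · rw [h M (by simp), List.getElem_append_right (by simp)]
    simp
  · simp only [List.length_append, toeplitzWord_length, List.length_singleton] at hi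
    rw [List.getElem_append]
    split_ifs with hiM
    · rw [h (i + 1) (by omega) (by simp at hiM; omega)]
      simp [toeplitzWord]
    · obtain rfl : i = M := by simp at hiM; omega
      simpa using hx

lemma mem_cylF_wrd_append_ltr_iff {n m : ℕ} (hn : 1 ≤ n) (hm : 1 ≤ m) {ω : ℤ → A} :
    ω ∈ cylF ξ (wrd n ++ ltr m) ↔
      ω ∈ Omega ξ ∧ (∀ j : ℤ, 0 < j → j < 2 ^ n → ω j = toeplitz j) ∧ ω (2 ^ n) = levelLetter m := by
  obtain ⟨k, rfl⟩ : ∃ k, n = k + 1 := ⟨n - 1, by omega⟩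
  obtain ⟨l, rfl⟩ : ∃ l, m = l + 1 := ⟨m - 1, by omega⟩
  have hcast : ((2 ^ (k + 1) - 1 : ℕ) : ℤ) = 2 ^ (k + 1) - 1 := by
    push_cast [Nat.one_le_two_pow]; ring
  rw [wrd_succ, ltr_succ, mem_cylF_toeplitzWord_append_iff, hcast, sub_add_cancel]
  simp only [Int.le_sub_one_iff]

lemma shiftN_neg_apply_eq_toeplitz {ω : ℤ → A} {P R c j : ℤ} {K : ℕ}
    (hP : ∀ i : ℤ, -R ≤ i → i ≤ R → ω i = toeplitz (i + P)) (hc : 2 ^ K ∣ P - c)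
    (hj : ¬ 2 ^ K ∣ j) (hR : -R ≤ j - c) (hR' : j - c ≤ R) : shiftN (-c) ω j = toeplitz j := by
  rw [shiftN, ← sub_eq_add_neg, hP _ hR hR', show j - c + P = j + (P - c) by ring,
    toeplitz_add_of_dvd hc hj]

lemma cylF_wrd_append_ltr_succ (hξ : IsFixed ξ) {n : ℕ} (hn : 1 ≤ n) :
    cylF ξ (wrd n ++ ltr (n + 1)) = shiftN (2 ^ n : ℤ) '' cylF ξ (wrd (n + 1) ++ ltr (n + 1)) := by
  obtain ⟨k, rfl⟩ : ∃ k, n = k + 1 := ⟨n - 1, by omega⟩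
  have h4N : (2 : ℤ) ^ (k + 2) = 4 * 2 ^ k := by ring
  ext ω
  constructor
  · rw [mem_image_shiftN_iff, mem_cylF_wrd_append_ltr_iff hn (by omega),
      mem_cylF_wrd_append_ltr_iff (by omega) (by omega)]
    rintro ⟨hω, hpre, hlast⟩
    obtain ⟨P, hP⟩ := hξ.exists_offset hω (2 ^ (k + 1))
    have hdvd : 2 ^ k ∣ P := two_pow_dvd_of_toeplitz_add_eq k fun j hj hj' => by
      rw [← hP j (by omega) (by omega), hpre j hj hj']
    have hdigit := dvd_sub_of_toeplitz_two_pow_succ_add hdvd (by rw [← hP _ (by omega) le_rfl, hlast])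
    refine ⟨shiftN_mem_Omega hω _, fun j hj hj' => ?_, ?_⟩
    · exact shiftN_neg_apply_eq_toeplitz hP hdigit (not_dvd_of_lt_of_lt (m := 0) (by omega) (by omega))
        (by omega) (by omega)
    · rw [shiftN, show (2 : ℤ) ^ (k + 1 + 1) + -2 ^ (k + 1) = 2 ^ (k + 1) by omega, hlast]
  · rintro ⟨ω', hω', rfl⟩
    rw [mem_cylF_wrd_append_ltr_iff (by omega) (by omega)] at hω'
    obtain ⟨hω', hpre, hlast⟩ := hω'
    rw [mem_cylF_wrd_append_ltr_iff hn (by omega)]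
    refine ⟨shiftN_mem_Omega hω' _, fun j hj hj' => ?_, ?_⟩
    · rw [shiftN, hpre _ (by omega) (by omega),
        toeplitz_add_of_dvd (dvd_refl _) (not_dvd_of_lt_of_lt (m := 0) (by omega) (by omega))]
    · rw [shiftN, ← hlast]
      congr 1
      ring

lemma cylF_wrd_succ_append_ltr_subset (hξ : IsFixed ξ) {n : ℕ} (hn : 1 ≤ n) :
    cylF ξ (wrd (n + 1) ++ ltr n) ⊆
      shiftN (2 ^ (n + 1) : ℤ) '' cylF ξ (wrd (n + 2) ++ ltr n) ∪
        shiftN (3 * 2 ^ n : ℤ) '' cylF ξ (wrd (n + 2) ++ ltr n) := by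
  have hN : (0 : ℤ) < 2 ^ n := by positivity
  have h4N : (2 : ℤ) ^ (n + 2) = 4 * 2 ^ n := by ring
  intro ω
  simp (disch := omega) only [Set.mem_union, mem_image_shiftN_iff, mem_cylF_wrd_append_ltr_iff]
  rintro ⟨hω, hpre, hlast⟩
  obtain ⟨P, hP⟩ := hξ.exists_offset hω (2 ^ (n + 2))
  have hdvd : 2 ^ n ∣ P := two_pow_dvd_of_toeplitz_add_eq n fun j hj hj' => by
    rw [← hP j (by omega) (by omega), hpre j hj hj']
  have hmid : toeplitz (2 ^ n + P) = levelLetter n := by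
    rw [← hP _ (by omega) (by omega), hpre _ hN (by omega), toeplitz_two_pow]
  have hend : toeplitz (2 ^ (n + 1) + P) = levelLetter n := by
    rw [← hP _ (by omega) (by omega), hlast]
  rcases dvd_sub_or_dvd_sub_of_toeplitz_two_pow_add hdvd hmid hend with hc | hc
  · refine Or.inl ⟨shiftN_mem_Omega hω _, fun j hj hj' => ?_, ?_⟩
    · exact shiftN_neg_apply_eq_toeplitz hP hc (not_dvd_of_lt_of_lt (m := 0) (by omega) (by omega))
        (by omega) (by omega)
    · rw [shiftN, show (2 : ℤ) ^ (n + 2) + -2 ^ (n + 1) = 2 ^ (n + 1) by omega, hlast]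
  · refine Or.inr ⟨shiftN_mem_Omega hω _, fun j hj hj' => ?_, ?_⟩
    · exact shiftN_neg_apply_eq_toeplitz hP hc (not_dvd_of_lt_of_lt (m := 0) (by omega) (by omega))
        (by omega) (by omega)
    · rw [shiftN, show (2 : ℤ) ^ (n + 2) + -(3 * 2 ^ n) = 2 ^ n by omega, hpre _ hN (by omega),
        toeplitz_two_pow]

lemma shiftN_two_pow_succ_mem_cylF {n : ℕ} (hn : 1 ≤ n) {ω : ℤ → A}
    (hω : ω ∈ cylF ξ (wrd (n + 2) ++ ltr n)) :
    shiftN (2 ^ (n + 1)) ω ∈ cylF ξ (wrd (n + 1) ++ ltr n) := by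
  have hN : (0 : ℤ) < 2 ^ n := by positivity
  have h4N : (2 : ℤ) ^ (n + 2) = 4 * 2 ^ n := by ring
  rw [mem_cylF_wrd_append_ltr_iff (by omega) hn] at hω ⊢
  obtain ⟨hω, hpre, hlast⟩ := hω
  refine ⟨shiftN_mem_Omega hω _, fun j hj hj' => ?_, ?_⟩
  · rw [shiftN, hpre _ (by omega) (by omega),
      toeplitz_add_of_dvd (dvd_refl _) (not_dvd_of_lt_of_lt (m := 0) (by omega) (by omega))]
  · rw [shiftN, ← hlast]
    congr 1
    omega

lemma shiftN_three_mul_two_pow_mem_cylF (hξ : IsFixed ξ) {n : ℕ} (hn : 1 ≤ n) {ω : ℤ → A}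
    (hω : ω ∈ cylF ξ (wrd (n + 2) ++ ltr n)) :
    shiftN (3 * 2 ^ n) ω ∈ cylF ξ (wrd (n + 1) ++ ltr n) := by
  have hN : (0 : ℤ) < 2 ^ n := by positivity
  have h4N : (2 : ℤ) ^ (n + 2) = 4 * 2 ^ n := by ring
  rw [mem_cylF_wrd_append_ltr_iff (by omega) hn] at hω ⊢
  obtain ⟨hω, hpre, hlast⟩ := hω
  -- `ω` is read beyond its prescribed prefix: its offset is a multiple of `2 ^ (n + 2)`
  obtain ⟨P, hP⟩ := hξ.exists_offset hω (5 * 2 ^ n)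
  have hdvd : 2 ^ (n + 1) ∣ P := two_pow_dvd_of_toeplitz_add_eq (n + 1) fun j hj hj' => by
    rw [← hP j (by omega) (by omega), hpre j hj (by omega)]
  have hdvd' : 2 ^ (n + 2) ∣ P :=
    dvd_of_toeplitz_two_pow_add_two_add hdvd (by rw [← hP _ (by omega) (by omega), hlast])
  refine ⟨shiftN_mem_Omega hω _, fun j hj hj' => ?_, ?_⟩
  · rw [shiftN]
    rcases lt_trichotomy j (2 ^ n) with hjN | rfl | hjN
    · rw [hP _ (by omega) (by omega),
        toeplitz_add_of_dvd hdvd' (not_dvd_of_lt_of_lt (m := 0) (by omega) (by omega)),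
        toeplitz_add_of_dvd (K := n) (dvd_mul_left _ _)
          (not_dvd_of_lt_of_lt (m := 0) (by omega) (by omega))]
    · rw [show (2 : ℤ) ^ n + 3 * 2 ^ n = 2 ^ (n + 2) by omega, hlast, toeplitz_two_pow]
    · rw [hP _ (by omega) (by omega),
        toeplitz_add_of_dvd hdvd' (not_dvd_of_lt_of_lt (m := 1) (by omega) (by omega)),
        toeplitz_add_of_dvd (K := n) (dvd_mul_left _ _)
          (not_dvd_of_lt_of_lt (m := 1) (by omega) (by omega))]
  · rw [shiftN, hP _ (by omega) (by omega), show (2 : ℤ) ^ (n + 1) + 3 * 2 ^ n = 5 * 2 ^ n by omega,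
      toeplitz_add_of_dvd hdvd' (not_dvd_of_lt_of_lt (m := 1) (by omega) (by omega)),
      mul_comm, toeplitz_two_pow_mul_of_odd n ⟨2, by norm_num⟩]

lemma cylF_wrd_succ_append_ltr (hξ : IsFixed ξ) {n : ℕ} (hn : 1 ≤ n) :
    cylF ξ (wrd (n + 1) ++ ltr n) =
      shiftN (2 ^ (n + 1) : ℤ) '' cylF ξ (wrd (n + 2) ++ ltr n) ∪
        shiftN (3 * 2 ^ n : ℤ) '' cylF ξ (wrd (n + 2) ++ ltr n) :=
  (cylF_wrd_succ_append_ltr_subset hξ hn).antisymm <| Set.union_subset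
    (Set.image_subset_iff.2 fun _ => shiftN_two_pow_succ_mem_cylF hn)
    (Set.image_subset_iff.2 fun _ => shiftN_three_mul_two_pow_mem_cylF hξ hn)

lemma disjoint_image_shiftN_cylF {n : ℕ} (hn : 1 ≤ n) :
    Disjoint (shiftN (2 ^ (n + 1) : ℤ) '' cylF ξ (wrd (n + 2) ++ ltr n))
      (shiftN (3 * 2 ^ n : ℤ) '' cylF ξ (wrd (n + 2) ++ ltr n)) := by
  rw [Set.disjoint_left]
  rintro ω ⟨ω₁, h₁, rfl⟩ ⟨ω₂, h₂, he⟩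
  rw [mem_cylF_wrd_append_ltr_iff (by omega) hn] at h₁ h₂
  have hN : (0 : ℤ) < 2 ^ n := by positivity
  have h4N : (2 : ℤ) ^ (n + 2) = 4 * 2 ^ n := by ring
  have h₀ := congrFun he 0
  simp only [shiftN, zero_add] at h₀
  rw [h₁.2.1 _ (by positivity) (by rw [pow_succ]; omega), h₂.2.1 _ (by positivity) (by omega),
    toeplitz_two_pow, mul_comm, toeplitz_two_pow_mul_of_odd n ⟨1, by norm_num⟩] at h₀
  exact levelLetter_succ_ne n h₀.symm

end

theorem stmt16 (ξ : ℕ → A) (hξ : IsFixed ξ) :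
    ∀ n : ℕ, 1 ≤ n →
      cylF ξ (wrd n ++ ltr (n + 1)) =
        shiftN (2 ^ n : ℤ) '' cylF ξ (wrd (n + 1) ++ ltr (n + 1)) ∧
      cylF ξ (wrd (n + 1) ++ ltr n) =
        shiftN (2 ^ (n + 1) : ℤ) '' cylF ξ (wrd (n + 2) ++ ltr n) ∪
          shiftN (3 * 2 ^ n : ℤ) '' cylF ξ (wrd (n + 2) ++ ltr n) ∧
      Disjoint (shiftN (2 ^ (n + 1) : ℤ) '' cylF ξ (wrd (n + 2) ++ ltr n))
        (shiftN (3 * 2 ^ n : ℤ) '' cylF ξ (wrd (n + 2) ++ ltr n)) := fun _ hn =>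
  ⟨cylF_wrd_append_ltr_succ hξ hn, cylF_wrd_succ_append_ltr hξ hn, disjoint_image_shiftN_cylF hn⟩
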